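/- arXiv:1705.07876 — 5 statements merged into one kernel-verified Lean document; each statement's English description precedes it below -/
import Mathlib

section
/- Let μ^(0) ⊂ μ^(1) ⊂ ... ⊂ μ^(N) be a chain of partitions where μ^(k) is obtained from μ^(k−1) by adding a single box in the northmost possible row r satisfying μ^(k−1)_r − μ^(0)_r < r − 1 such that the result is a partition. Let c_0,...,c_N ≥ 0 with Σ c_k = 1, μ̄ = Σ c_k μ^(k), and suppose |μ̄| − |μ^(0)| = K for an integer K with 0 ≤ K ≤ N. Then μ̄ is majorized by μ^(K): for every t, μ̄_1 + ... + μ̄_t ≤ μ^(K)_1 + ... + μ^(K)_t, and |μ̄| = |μ^(K)|. -/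
open Finset

/-- Sum of the first `t` coordinates of a vector. -/
def psum {n : ℕ} (v : Fin n → ℝ) (t : ℕ) : ℝ := ∑ i : Fin n, if (i : ℕ) < t then v i else 0

/-- Sum of the first `t` coordinates of a vector of naturals. -/
def npsum {n : ℕ} (v : Fin n → ℕ) (t : ℕ) : ℕ := ∑ i : Fin n, if (i : ℕ) < t then v i else 0

/-- The decreasing rearrangement `v↓` of a vector. -/
noncomputable def decSort {n : ℕ} (v : Fin n → ℝ) : Fin n → ℝ := fun i => v (Tuple.sort v i.rev)

/-- `Majorizes w v` : `v` is majorized by `w`. -/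
def Majorizes {n : ℕ} (w v : Fin n → ℝ) : Prop :=
  (∀ t, psum (decSort v) t ≤ psum (decSort w) t) ∧ ∑ i, v i = ∑ i, w i

/-- The permutahedron of `v`: convex hull of the orbit of `v` under coordinate permutations. -/
noncomputable def permutahedron {n : ℕ} (v : Fin n → ℝ) : Set (Fin n → ℝ) :=
  convexHull ℝ {w | ∃ σ : Equiv.Perm (Fin n), w = v ∘ σ}

/-- Row `ρ` (0-indexed; 1-indexed row `ρ+1`) can receive a box: the current excess over `lam`
is `< (ρ+1) - 1 = ρ` and adding a box keeps the shape a partition. -/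
def AddableRow {n : ℕ} (lam mu : Fin n → ℕ) (ρ : Fin n) : Prop :=
  mu ρ < lam ρ + (ρ : ℕ) ∧ Antitone (Function.update mu ρ (mu ρ + 1))

/-- One step of the northmost-box-adding construction relative to the base partition `lam`. -/
def NorthStep {n : ℕ} (lam muprev munext : Fin n → ℕ) : Prop :=
  ∃ ρ : Fin n, AddableRow lam muprev ρ ∧ (∀ ρ' : Fin n, ρ' < ρ → ¬ AddableRow lam muprev ρ') ∧
    munext = Function.update muprev ρ (muprev ρ + 1)

/-- A row- and column-strictly increasing skew tableau of shape `mu/lam` whose entries in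
(1-indexed) row `r+1` lie in `{1, ..., r}`, i.e. are at most `(r+1) - 1`. -/
def IsFlaggedTableau {n : ℕ} (lam mu : Fin n → ℕ) (T : Fin n → ℕ → ℕ) : Prop :=
  (∀ i, lam i ≤ mu i) ∧
  (∀ r : Fin n, ∀ c, lam r ≤ c → c < mu r → 1 ≤ T r c ∧ T r c ≤ (r : ℕ)) ∧
  (∀ r : Fin n, ∀ c c', lam r ≤ c → c < c' → c' < mu r → T r c < T r c') ∧
  (∀ r r' : Fin n, r < r' → ∀ c, lam r ≤ c → c < mu r → lam r' ≤ c → c < mu r' → T r c < T r' c)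

/-- The number of flagged tableaux of shape `mu/lam` (tableaux normalized to vanish off the shape). -/
noncomputable def flaggedCount {n : ℕ} (lam mu : Fin n → ℕ) : ℕ :=
  Set.ncard {T : Fin n → ℕ → ℕ | IsFlaggedTableau lam mu T ∧
    ∀ (r : Fin n) (c : ℕ), (c < lam r ∨ mu r ≤ c) → T r c = 0}

/-- The coefficient `a_{lam,mu}` in the Schur expansion of the symmetric Grothendieck polynomial. -/
noncomputable def grothCoeff {n : ℕ} (lam mu : Fin n → ℕ) : ℝ :=
  if Antitone mu ∧ ∀ i, lam i ≤ mu i then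
    (-1 : ℝ) ^ (∑ i, mu i - ∑ i, lam i) * flaggedCount lam mu
  else 0

/-- A semistandard Young tableau of shape `lam` with entries in `{1, ..., n}`. -/
def IsSSYT {n : ℕ} (lam : Fin n → ℕ) (T : Fin n → ℕ → ℕ) : Prop :=
  (∀ r : Fin n, ∀ c, c < lam r → 1 ≤ T r c ∧ T r c ≤ n) ∧
  (∀ r : Fin n, ∀ c c', c ≤ c' → c' < lam r → T r c ≤ T r c') ∧
  (∀ r r' : Fin n, r < r' → ∀ c, c < lam r' → c < lam r → T r c < T r' c)

/-- The Kostka number `K_{lam,α}`: the number of SSYT of shape `lam` and weight `α`. -/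
noncomputable def kostka {n : ℕ} (lam : Fin n → ℕ) (α : Fin n →₀ ℕ) : ℕ :=
  Set.ncard {T : Fin n → ℕ → ℕ | IsSSYT lam T ∧ (∀ (r : Fin n) (c : ℕ), lam r ≤ c → T r c = 0) ∧
    ∀ i : Fin n, α i = Set.ncard {p : Fin n × ℕ | p.2 < lam p.1 ∧ T p.1 p.2 = (i : ℕ) + 1}}

/-- The Schur polynomial `s_lam(x_1, ..., x_n)`, as the generating polynomial of SSYT. -/
noncomputable def schur {n : ℕ} (lam : Fin n → ℕ) : MvPolynomial (Fin n) ℝ :=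
  ∑ α ∈ Finset.Iic (Finsupp.equivFunOnFinite.symm (fun _ : Fin n => ∑ i, lam i)),
    (kostka lam α : ℝ) • MvPolynomial.monomial α 1

/-- The symmetric Grothendieck polynomial `G_lam(x_1, ..., x_n) = ∑_mu a_{lam,mu} s_mu`. -/
noncomputable def grothendieck {n : ℕ} (lam : Fin n → ℕ) : MvPolynomial (Fin n) ℝ :=
  ∑ m ∈ Finset.Iic (Finsupp.equivFunOnFinite.symm (fun i : Fin n => lam i + (i : ℕ))),
    grothCoeff lam (fun i => m i) • schur (fun i => m i)

/-- The Newton polytope of a polynomial: convex hull of its exponent vectors. -/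
noncomputable def newton {n : ℕ} (f : MvPolynomial (Fin n) ℝ) : Set (Fin n → ℝ) :=
  convexHull ℝ ((fun α : Fin n →₀ ℕ => fun i => (α i : ℝ)) '' (f.support : Set (Fin n →₀ ℕ)))

/-- A polynomial has saturated Newton polytope (SNP) if every lattice point of its Newton
polytope is an exponent vector with nonzero coefficient. -/
def SNP {n : ℕ} (f : MvPolynomial (Fin n) ℝ) : Prop :=
  ∀ α : Fin n →₀ ℕ, (fun i => (α i : ℝ)) ∈ newton f → MvPolynomial.coeff α f ≠ 0

/-! Write `μ^(k+1) = μ^(k) + e_{r_k}`. Since every box goes into the northmost admissible row,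
the rows weakly increase, `r_0 ≤ r_1 ≤ ⋯`: a row north of `r_k` that is admissible after step `k`
was already admissible before it. So for fixed `t` the partial sum `μ^(k)_1 + ⋯ + μ^(k)_t` is
`λ_1 + ⋯ + λ_t + #{j < k | r_j < t} = λ_1 + ⋯ + λ_t + min(k, m_t)`, a concave function of `k`,
while `|μ^(k)| = |λ| + k` turns the hypothesis on `|μ̄|` into `∑ c_k k = K`. Jensen's inequality
for this concave function is the claimed bound. -/

section PartialSums

variable {n : ℕ}

lemma npsum_update_add_one (v : Fin n → ℕ) (ρ : Fin n) (t : ℕ) :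
    npsum (Function.update v ρ (v ρ + 1)) t = npsum v t + if (ρ : ℕ) < t then 1 else 0 := by
  have hv : Function.update v ρ (v ρ + 1) = v + Pi.single ρ 1 := by
    ext i
    rcases eq_or_ne i ρ with rfl | hi <;> simp [*]
  simp only [hv, npsum, Pi.add_apply, ite_add_zero, Finset.sum_add_distrib, Pi.single_apply]
  congr 1
  rw [Fintype.sum_eq_single ρ fun i hi => by simp [hi]]
  simp

lemma psum_natCast (v : Fin n → ℕ) (t : ℕ) : psum (fun i => (v i : ℝ)) t = npsum v t := by
  simp [psum, npsum]

lemma psum_sum_smul {ι : Type*} (s : Finset ι) (c : ι → ℝ) (v : ι → Fin n → ℝ) (t : ℕ) :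
    psum (∑ k ∈ s, c k • v k) t = ∑ k ∈ s, c k * psum (v k) t := by
  simp only [psum, Finset.sum_apply, Pi.smul_apply, smul_eq_mul, Finset.mul_sum, mul_ite, mul_zero]
  rw [Finset.sum_comm]
  exact Finset.sum_congr rfl fun i _ => by split_ifs <;> simp

lemma psum_of_le {t : ℕ} (h : n ≤ t) (v : Fin n → ℝ) : psum v t = ∑ i, v i :=
  Finset.sum_congr rfl fun i _ => if_pos (i.2.trans_le h)

lemma npsum_of_le {t : ℕ} (h : n ≤ t) (v : Fin n → ℕ) : npsum v t = ∑ i, v i :=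
  Finset.sum_congr rfl fun i _ => if_pos (i.2.trans_le h)

end PartialSums

section Northmost

variable {n : ℕ} {lam : Fin n → ℕ}

open Function

lemma antitone_update_add_one {a : Fin n → ℕ} (ha : Antitone a) {ρ : Fin n}
    (h : ∀ i < ρ, a ρ < a i) : Antitone (update a ρ (a ρ + 1)) := by
  intro i j hij
  rcases eq_or_ne i ρ with rfl | hi <;> rcases eq_or_ne j i with rfl | hj
  · exact le_rfl
  · rw [update_self, update_of_ne hj]
    exact (ha hij).trans (Nat.le_succ _)
  · exact le_rfl
  · rcases eq_or_ne j ρ with rfl | hjρ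
    · rw [update_self, update_of_ne hi]
      exact h i (lt_of_le_of_ne hij hi)
    · rw [update_of_ne hi, update_of_ne hjρ]
      exact ha hij

lemma le_of_addableRow_update {a : Fin n → ℕ} (ha : Antitone a) {ρ₁ ρ₂ : Fin n}
    (hmin : ∀ ρ < ρ₁, ¬AddableRow lam a ρ)
    (h₂ : AddableRow lam (update a ρ₁ (a ρ₁ + 1)) ρ₂) : ρ₁ ≤ ρ₂ := by
  by_contra! hlt
  have hb : update a ρ₁ (a ρ₁ + 1) ρ₂ = a ρ₂ := update_of_ne hlt.ne _ _
  refine hmin ρ₂ hlt ⟨hb ▸ h₂.1, antitone_update_add_one ha fun i hi => ?_⟩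
  have := h₂.2 hi.le
  rwa [update_self, hb, update_of_ne hi.ne, update_of_ne (hi.trans hlt).ne] at this

variable {N : ℕ} {μ : Fin (N + 1) → Fin n → ℕ} {r : Fin N → Fin n}

lemma monotone_of_northmost (hanti : ∀ k, Antitone (μ k))
    (hadd : ∀ k, AddableRow lam (μ k.castSucc) (r k))
    (hmin : ∀ k, ∀ ρ < r k, ¬AddableRow lam (μ k.castSucc) ρ)
    (hstep : ∀ k, μ k.succ = update (μ k.castSucc) (r k) (μ k.castSucc (r k) + 1)) :
    Monotone r := by
  cases N with
  | zero => exact fun i => i.elim0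
  | succ N =>
    refine Fin.monotone_iff_le_succ.2 fun k => le_of_addableRow_update (hanti _) (hmin _) ?_
    rw [← hstep, Fin.succ_castSucc]
    exact hadd k.succ

lemma npsum_eq_npsum_zero_add_count
    (hstep : ∀ k, μ k.succ = update (μ k.castSucc) (r k) (μ k.castSucc (r k) + 1))
    (t : ℕ) (k : Fin (N + 1)) :
    npsum (μ k) t = npsum (μ 0) t + Nat.count (fun j => ∃ h : j < N, (r ⟨j, h⟩ : ℕ) < t) k := by
  induction k using Fin.induction with
  | zero => simp
  | succ k ih =>
    rw [hstep, npsum_update_add_one, ih, Fin.val_succ, Fin.val_castSucc, Nat.count_succ, add_assoc]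
    simp [k.isLt]

end Northmost

lemma Nat.count_le_count_of_not {P : ℕ → Prop} [DecidablePred P]
    (hP : ∀ i j, i ≤ j → P j → P i) {j K : ℕ} (hjK : j < K) (hj : ¬P j) (x : ℕ) :
    Nat.count P x ≤ Nat.count P K := by
  by_contra! h
  obtain ⟨y, hy, hPy⟩ := Nat.exists_of_count_lt_count h
  exact hj (hP j y (hjK.le.trans hy.1) hPy)

lemma sum_mul_count_le_count {ι : Type*} (s : Finset ι) {P : ℕ → Prop} [DecidablePred P]
    (hP : ∀ i j, i ≤ j → P j → P i) {c : ι → ℝ} (hc : ∀ i ∈ s, 0 ≤ c i)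
    (hc1 : ∑ i ∈ s, c i = 1) {x : ι → ℕ} {K : ℕ} (hK : ∑ i ∈ s, c i * x i = K) :
    ∑ i ∈ s, c i * Nat.count P (x i) ≤ Nat.count P K := by
  by_cases hall : ∀ j < K, P j
  · calc ∑ i ∈ s, c i * Nat.count P (x i) ≤ ∑ i ∈ s, c i * x i :=
          sum_le_sum fun i hi => mul_le_mul_of_nonneg_left (by exact_mod_cast Nat.count_le _) (hc i hi)
      _ = Nat.count P K := by rw [hK, Nat.count_iff_forall.2 hall]
  · push Not at hall
    obtain ⟨j, hjK, hj⟩ := hall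
    calc ∑ i ∈ s, c i * Nat.count P (x i) ≤ ∑ i ∈ s, c i * Nat.count P K :=
          sum_le_sum fun i hi => mul_le_mul_of_nonneg_left
            (by exact_mod_cast Nat.count_le_count_of_not hP hjK hj _) (hc i hi)
      _ = Nat.count P K := by rw [← sum_mul, hc1, one_mul]

/-- Claim C of Escobar–Yong: if `μ^(0) ⊂ ⋯ ⊂ μ^(N)` is the northmost-box-adding chain,
`μ̄ = ∑ c_k μ^(k)` is a convex combination and `|μ̄| - |μ^(0)| = K`, then `μ̄` is majorized
by `μ^(K)`. -/
theorem claimC {n N : ℕ} (lam : Fin n → ℕ) (hlam : Antitone lam)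
    (μ : Fin (N + 1) → Fin n → ℕ) (h0 : μ 0 = lam)
    (hchain : ∀ k : Fin N, NorthStep lam (μ k.castSucc) (μ k.succ))
    (c : Fin (N + 1) → ℝ) (hc : ∀ k, 0 ≤ c k) (hc1 : ∑ k, c k = 1)
    (K : ℕ) (hK : K ≤ N)
    (hKsum : ∑ i, (∑ k, c k • fun j => (μ k j : ℝ)) i = ∑ i, (lam i : ℝ) + K) :
    (∀ t, psum (∑ k, c k • fun j => (μ k j : ℝ)) t
        ≤ psum (fun j => (μ ⟨K, Nat.lt_succ_of_le hK⟩ j : ℝ)) t) ∧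
      ∑ i, (∑ k, c k • fun j => (μ k j : ℝ)) i
        = ∑ i, (μ ⟨K, Nat.lt_succ_of_le hK⟩ i : ℝ) := by
  choose r hadd hmin hstep using hchain
  have hanti : ∀ k, Antitone (μ k) := Fin.cases (h0 ▸ hlam) fun k => hstep k ▸ (hadd k).2
  have hr : Monotone r := monotone_of_northmost hanti hadd hmin hstep
  set Q : ℕ → ℕ → Prop := fun t j => ∃ h : j < N, (r ⟨j, h⟩ : ℕ) < t
  have hQ : ∀ t i j, i ≤ j → Q t j → Q t i := fun t i j hij ⟨hj, h⟩ =>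
    ⟨hij.trans_lt hj, (Fin.le_iff_val_le_val.1 (hr (Fin.mk_le_mk.2 hij))).trans_lt h⟩
  have hpsum_chain : ∀ t k, psum (fun j => (μ k j : ℝ)) t = npsum lam t + Nat.count (Q t) k :=
    fun t k => by rw [psum_natCast, npsum_eq_npsum_zero_add_count hstep, h0]; push_cast; rfl
  have hcount_n : ∀ k : Fin (N + 1), Nat.count (Q n) k = k := fun k =>
    Nat.count_iff_forall.2 fun j hj => ⟨hj.trans_le (Nat.lt_succ_iff.1 k.2), (r _).2⟩
  have hpsum_bar : ∀ t, psum (∑ k, c k • fun j => (μ k j : ℝ)) t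
      = npsum lam t + ∑ k, c k * Nat.count (Q t) k := by
    intro t
    simp_rw [psum_sum_smul, hpsum_chain, mul_add, sum_add_distrib, ← sum_mul, hc1, one_mul]
  have hmean : ∑ k, c k * ((k : ℕ) : ℝ) = K := by
    have := hpsum_bar n
    simp_rw [psum_of_le le_rfl, hKsum, npsum_of_le le_rfl, hcount_n] at this
    push_cast at this
    linarith
  refine ⟨fun t => ?_, ?_⟩
  · rw [hpsum_bar, hpsum_chain]
    gcongr
    exact sum_mul_count_le_count _ (hQ t) (fun k _ => hc k) hc1 hmean
  · rw [hKsum, ← psum_of_le le_rfl fun i => (μ ⟨K, _⟩ i : ℝ), hpsum_chain, hcount_n, npsum_of_le le_rfl]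
    push_cast
    rfl
end

section
/- Fix n ≥ 1 and a partition λ with at most n parts. Define μ^(0) = λ and, for k ≥ 1, μ^(k) to be μ^(k−1) with one box added in the northmost row r such that μ^(k−1)_r − λ_r < r − 1 and the result is a partition (stopping when no such row exists or k = n). Then for each k, μ^(k) is the maximum in dominance order among all partitions μ of size |λ| + k with at most n parts satisfying μ_i ≤ λ_i + (i − 1) for all i and μ ⊇ λ for which the Grothendieck coefficient a_{λ,μ} is nonzero. In particular, any partition μ with a_{λ,μ} ≠ 0 and |μ| = |λ| + k satisfies μ ≤_D μ^(k). -/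
/-! Call `min_{j ≤ i} (λ_j + j)` (rows indexed from 0) the cap of row `i`: it is the longest row `i`
of any partition `μ` with `μ_j ≤ λ_j + j`, which is exactly the row bound imposed by a flagged
tableau of shape `μ/λ` (and sufficient for one to exist). By induction on `k`, `μ^(k)` has its rows
north of some row `ρ` at their caps and agrees with `λ` south of `ρ`, since the northmost addable
row is the first row below its cap. A competitor `μ` of the same size then has smaller partial
sums: through row `ρ` row by row, and beyond it because its tail is at least that of `λ`. -/

open Finset

/-- The longest row `i` of a partition `mu` with `mu j ≤ lam j + j` for all `j`. -/
noncomputable def rowCap {n : ℕ} (lam : Fin n → ℕ) (i : Fin n) : ℕ :=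
  (Finset.Iic i).inf' ⟨i, Finset.mem_Iic.2 le_rfl⟩ fun j => lam j + j

section RowCap

variable {n : ℕ} {lam mu : Fin n → ℕ}

lemma rowCap_le {i j : Fin n} (h : j ≤ i) : rowCap lam i ≤ lam j + j :=
  Finset.inf'_le _ (Finset.mem_Iic.2 h)

lemma le_rowCap {i : Fin n} {x : ℕ} (h : ∀ j ≤ i, x ≤ lam j + j) : x ≤ rowCap lam i :=
  Finset.le_inf' _ _ fun j hj => h j (Finset.mem_Iic.1 hj)

lemma rowCap_antitone : Antitone (rowCap lam) :=
  fun _ _ hij => le_rowCap fun _ hj => rowCap_le (hj.trans hij)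

lemma exists_rowCap_eq (i : Fin n) : ∃ j ≤ i, rowCap lam i = lam j + j := by
  obtain ⟨j, hj, hcap⟩ := Finset.exists_mem_eq_inf' (⟨i, Finset.mem_Iic.2 le_rfl⟩ :
    (Finset.Iic i).Nonempty) fun j => lam j + j
  exact ⟨j, Finset.mem_Iic.1 hj, hcap⟩

lemma le_rowCap_of_antitone (hmu : Antitone mu) (hub : ∀ i : Fin n, mu i ≤ lam i + i)
    (i : Fin n) : mu i ≤ rowCap lam i :=
  le_rowCap fun j hj => (hmu hj).trans (hub j)

end RowCap

section Flagged

variable {n : ℕ} {lam mu : Fin n → ℕ}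

/-- Row `i` of a flagged tableau is strictly increasing with entries in `{1, …, i}`, so it has at
most `i` boxes. -/
lemma IsFlaggedTableau.le_add {T : Fin n → ℕ → ℕ} (hT : IsFlaggedTableau lam mu T) (i : Fin n) :
    mu i ≤ lam i + i := by
  obtain ⟨-, hbound, hrow, -⟩ := hT
  have hgrow : ∀ j : ℕ, lam i + j < mu i → j + 1 ≤ T i (lam i + j) := by
    intro j
    induction j with
    | zero => intro hj; simpa using (hbound i (lam i) le_rfl (by omega)).1
    | succ j ih =>
      intro hj
      have := hrow i (lam i + j) (lam i + j + 1) (by omega) (by omega) (by omega)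
      have := ih (by omega)
      rw [← Nat.add_assoc]
      omega
  by_contra! h
  have := hgrow i h
  have := (hbound i (lam i + i) (by omega) h).2
  omega

/-- The filling `T r c = c + r + 1 - mu r` puts `r` at the end of every row `r`. -/
lemma exists_isFlaggedTableau (hmu : Antitone mu) (hle : ∀ i, lam i ≤ mu i)
    (hub : ∀ i : Fin n, mu i ≤ lam i + i) : ∃ T, IsFlaggedTableau lam mu T := by
  refine ⟨fun r c => c + r + 1 - mu r, hle, ?_, ?_, ?_⟩ <;> dsimp only
  · intro r c _ _
    have := hub r
    constructor <;> omega
  · intro r c c' _ _ _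
    have := hub r
    omega
  · intro r r' hrr' c _ _ _ _
    have := hub r
    have := hmu hrr'.le
    have : (r : ℕ) < r' := hrr'
    omega

end Flagged

section NorthStep

variable {n : ℕ} {lam mu mu' : Fin n → ℕ}

lemma antitone_update_succ (hmu : Antitone mu) {i : Fin n} (h : ∀ j < i, mu i < mu j) :
    Antitone (Function.update mu i (mu i + 1)) := by
  intro a b hab
  simp only [Function.update_apply]
  split_ifs with hb ha ha
  · exact le_rfl
  · subst hb
    exact h a (lt_of_le_of_ne hab ha)
  · subst ha
    have := hmu hab
    omega
  · exact hmu hab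

/-- If `rowCap lam ρ = lam j + j` and row `ρ` is that long, either it is at its own bound
(`j = ρ`) or row `j` is no longer than it. -/
lemma AddableRow.lt_rowCap {ρ : Fin n} (hadd : AddableRow lam mu ρ)
    (hub : ∀ i : Fin n, mu i ≤ lam i + i) : mu ρ < rowCap lam ρ := by
  obtain ⟨hbound, hanti⟩ := hadd
  obtain ⟨j, hjρ, hcap⟩ := exists_rowCap_eq (lam := lam) ρ
  rcases hjρ.lt_or_eq with hjρ | rfl
  · have hstep := hanti hjρ.le
    rw [Function.update_self, Function.update_of_ne hjρ.ne] at hstep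
    have := hub j
    omega
  · omega

/-- Rows north of the chosen row are full: otherwise the northmost non-full row is addable. -/
lemma eq_rowCap_of_forall_not_addableRow (hmu : Antitone mu) (hub : ∀ i : Fin n, mu i ≤ lam i + i)
    {ρ : Fin n} (hnorth : ∀ ρ' < ρ, ¬ AddableRow lam mu ρ') :
    ∀ i < ρ, mu i = rowCap lam i := by
  intro i
  induction i using WellFoundedLT.induction with
  | ind i ih =>
    intro hiρ
    refine le_antisymm (le_rowCap_of_antitone hmu hub i) ?_
    by_cases hdrop : ∀ j < i, mu i < mu j
    · have : ¬ mu i < lam i + i := fun hlt =>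
        hnorth i hiρ ⟨hlt, antitone_update_succ hmu hdrop⟩
      have := rowCap_le (lam := lam) (le_refl i)
      omega
    · push Not at hdrop
      obtain ⟨j, hji, hle⟩ := hdrop
      calc rowCap lam i ≤ rowCap lam j := rowCap_antitone hji.le
        _ = mu j := (ih j hji (hji.trans hiρ)).symm
        _ ≤ mu i := hle

lemma NorthStep.sum_eq (hs : NorthStep lam mu mu') : ∑ i, mu' i = ∑ i, mu i + 1 := by
  obtain ⟨ρ, -, -, rfl⟩ := hs
  rw [Finset.sum_update_of_mem (Finset.mem_univ ρ), ← Finset.add_sum_erase _ _ (Finset.mem_univ ρ),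
    Finset.sdiff_singleton_eq_erase]
  ring

end NorthStep

/-- The shape of every `μ^(k)`; row `ρ` itself is the one still being filled. -/
structure IsNorthShape {n : ℕ} (lam mu : Fin n → ℕ) : Prop where
  antitone : Antitone mu
  le : ∀ i, lam i ≤ mu i
  le_add : ∀ i : Fin n, mu i ≤ lam i + i
  split : ∃ ρ : ℕ, (∀ i : Fin n, (i : ℕ) < ρ → mu i = rowCap lam i) ∧
    ∀ i : Fin n, ρ < (i : ℕ) → mu i = lam i

namespace IsNorthShape

variable {n : ℕ} {lam mu mu' : Fin n → ℕ}

lemma self (hlam : Antitone lam) : IsNorthShape lam lam :=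
  ⟨hlam, fun _ => le_rfl, fun _ => Nat.le_add_right _ _, 0, fun _ hi => absurd hi (by omega),
    fun _ _ => rfl⟩

lemma northStep (h : IsNorthShape lam mu) (hs : NorthStep lam mu mu') : IsNorthShape lam mu' := by
  obtain ⟨hmu, hle, hub, ρ₀, hfull₀, htail⟩ := h
  obtain ⟨ρ, hadd, hnorth, rfl⟩ := hs
  have hfull := eq_rowCap_of_forall_not_addableRow hmu hub hnorth
  have hρ₀ : ρ₀ ≤ ρ := by
    by_contra! hlt
    exact (hadd.lt_rowCap hub).ne (hfull₀ ρ hlt)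
  refine ⟨hadd.2, fun i => ?_, fun i => ?_, ρ, fun i hi => ?_, fun i hi => ?_⟩
  · rw [Function.update_apply]
    split_ifs with h
    · exact h ▸ (hle ρ).trans (Nat.le_succ _)
    · exact hle i
  · rw [Function.update_apply]
    split_ifs with h
    · exact h ▸ hadd.1
    · exact hub i
  · rw [Function.update_of_ne (Fin.ne_of_lt hi)]
    exact hfull i hi
  · rw [Function.update_of_ne (Fin.ne_of_gt hi)]
    exact htail i (by omega)

end IsNorthShape

lemma npsum_add_sum_ite_lt {n : ℕ} (v : Fin n → ℕ) (t : ℕ) :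
    npsum v t + ∑ i : Fin n, (if (i : ℕ) < t then 0 else v i) = ∑ i, v i := by
  rw [npsum, ← Finset.sum_add_distrib]
  exact Finset.sum_congr rfl fun i _ => by split_ifs <;> simp

/-- Up to row `ρ` no admissible `nu` has longer rows than `mu`; after it, `mu` is as short as
possible, so equal sizes make its partial sums the larger ones there as well. -/
lemma IsNorthShape.npsum_le {n : ℕ} {lam mu nu : Fin n → ℕ} (h : IsNorthShape lam mu)
    (hnu : Antitone nu) (hle : ∀ i, lam i ≤ nu i) (hub : ∀ i : Fin n, nu i ≤ lam i + i)
    (hsum : ∑ i, nu i = ∑ i, mu i) (t : ℕ) : npsum nu t ≤ npsum mu t := by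
  obtain ⟨ρ, hfull, htail⟩ := h.split
  by_cases ht : t ≤ ρ
  · refine Finset.sum_le_sum fun i _ => ?_
    split_ifs with hi
    · exact (le_rowCap_of_antitone hnu hub i).trans_eq (hfull i (by omega)).symm
    · exact le_rfl
  · have htail_le : ∑ i : Fin n, (if (i : ℕ) < t then 0 else mu i) ≤
        ∑ i : Fin n, (if (i : ℕ) < t then 0 else nu i) := by
      refine Finset.sum_le_sum fun i _ => ?_
      split_ifs with hi
      · exact le_rfl
      · exact (htail i (by omega)).trans_le (hle i)
    have := npsum_add_sum_ite_lt nu t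
    have := npsum_add_sum_ite_lt mu t
    omega

/-- Claim A of Escobar–Yong: `μ^(k)` is the dominance-order maximum among all partitions `μ`
of size `|λ| + k` with at most `n` parts, satisfying `μ_i ≤ λ_i + (i-1)`, `μ ⊇ λ`, and
admitting a flagged tableau of shape `μ/λ` (i.e. `a_{λ,μ} ≠ 0`). -/
theorem claimA {n N : ℕ} (lam : Fin n → ℕ) (hlam : Antitone lam)
    (μ : Fin (N + 1) → Fin n → ℕ) (h0 : μ 0 = lam)
    (hchain : ∀ k : Fin N, NorthStep lam (μ k.castSucc) (μ k.succ)) (k : Fin (N + 1)) :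
    (Antitone (μ k) ∧ (∀ i, lam i ≤ μ k i) ∧ (∀ i : Fin n, μ k i ≤ lam i + (i : ℕ)) ∧
        (∑ i, μ k i = ∑ i, lam i + (k : ℕ)) ∧ ∃ T, IsFlaggedTableau lam (μ k) T) ∧
      ∀ mu : Fin n → ℕ, Antitone mu → (∃ T, IsFlaggedTableau lam mu T) →
        ∑ i, mu i = ∑ i, lam i + (k : ℕ) → ∀ t, npsum mu t ≤ npsum (μ k) t := by
  have hchain_shape : ∀ k : Fin (N + 1), IsNorthShape lam (μ k) ∧ ∑ i, μ k i = ∑ i, lam i + k := by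
    intro k
    induction k using Fin.induction with
    | zero => rw [h0]; exact ⟨IsNorthShape.self hlam, by simp⟩
    | succ k ih =>
      refine ⟨ih.1.northStep (hchain k), ?_⟩
      rw [(hchain k).sum_eq, ih.2, Fin.val_succ, Fin.val_castSucc, Nat.add_assoc]
  obtain ⟨hshape, hsize⟩ := hchain_shape k
  refine ⟨⟨hshape.antitone, hshape.le, hshape.le_add, hsize,
    exists_isFlaggedTableau hshape.antitone hshape.le hshape.le_add⟩, ?_⟩
  rintro mu hmu ⟨T, hT⟩ hsum
  exact hshape.npsum_le hmu hT.1 hT.le_add (hsum.trans hsize.symm)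
end

section
/- Under the conditions of Claim A, for each k with 0 ≤ k ≤ N (where μ^(0),...,μ^(N) is the chain of partitions built by the northmost-box-adding rule from λ), the coefficient a_{λ,μ^(k)} is nonzero; equivalently, there exists a skew tableau of shape μ^(k)/λ that is strictly increasing along rows and columns, with every entry in row r at most r − 1. -/
open Finset

/-!
Every shape `μ^(k)` of the chain is a partition containing `λ` whose excess in (0-indexed)
row `i` is at most `i`: each step adds a box only to a row whose excess is still below that
bound. For any such shape, fill row `i` of `μ/λ` with consecutive integers ending in `i` at its
last box. The entries are at least `1` because the row has at most `i` boxes, rows increase by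
construction, and columns increase because in a lower row `i' > i` the right end `μ i' ≤ μ i`
is further left while the last entry `i'` is larger.
-/

open Function

structure IsFlaggedShape {n : ℕ} (lam mu : Fin n → ℕ) : Prop where
  antitone : Antitone mu
  le : lam ≤ mu
  le_add_index : ∀ i : Fin n, mu i ≤ lam i + (i : ℕ)

def rowEndFilling {n : ℕ} (mu : Fin n → ℕ) (r : Fin n) (c : ℕ) : ℕ := c + (r : ℕ) + 1 - mu r

namespace IsFlaggedShape

variable {n : ℕ} {lam mu : Fin n → ℕ}

theorem self (hlam : Antitone lam) : IsFlaggedShape lam lam :=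
  ⟨hlam, le_rfl, fun _ => Nat.le_add_right _ _⟩

theorem update_of_addableRow (h : IsFlaggedShape lam mu) {ρ : Fin n}
    (hρ : AddableRow lam mu ρ) : IsFlaggedShape lam (update mu ρ (mu ρ + 1)) where
  antitone := hρ.2
  le i := by
    rcases eq_or_ne i ρ with rfl | hi
    · simpa using (h.le i).trans (Nat.le_succ _)
    · simpa [hi] using h.le i
  le_add_index i := by
    rcases eq_or_ne i ρ with rfl | hi
    · simpa using hρ.1
    · simpa [hi] using h.le_add_index i

theorem of_northStep {mu' : Fin n → ℕ} (h : IsFlaggedShape lam mu)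
    (hstep : NorthStep lam mu mu') : IsFlaggedShape lam mu' := by
  obtain ⟨ρ, hρ, -, rfl⟩ := hstep
  exact h.update_of_addableRow hρ

theorem isFlaggedTableau_rowEndFilling (h : IsFlaggedShape lam mu) :
    IsFlaggedTableau lam mu (rowEndFilling mu) := by
  have hexcess := h.le_add_index
  refine ⟨h.le, fun r c hlc hcm => ?_, fun r c c' hlc hcc' hc'm => ?_,
    fun r r' hrr' c _ _ hlc' _ => ?_⟩
  · have := hexcess r
    unfold rowEndFilling
    omega
  · have := hexcess r
    unfold rowEndFilling
    omega
  · have := hexcess r'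
    have hmu : mu r' ≤ mu r := h.antitone hrr'.le
    have hr : (r : ℕ) < r' := hrr'
    unfold rowEndFilling
    omega

end IsFlaggedShape

/-- For every `k`, the coefficient `a_{λ,μ^(k)}` is nonzero: there is a row- and column-strictly
increasing skew tableau of shape `μ^(k)/λ` with every entry in (1-indexed) row `r` at most `r-1`. -/
theorem flagged_tableau_exists {n N : ℕ} (lam : Fin n → ℕ) (hlam : Antitone lam)
    (μ : Fin (N + 1) → Fin n → ℕ) (h0 : μ 0 = lam)
    (hchain : ∀ k : Fin N, NorthStep lam (μ k.castSucc) (μ k.succ)) :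
    ∀ k : Fin (N + 1), ∃ T : Fin n → ℕ → ℕ, IsFlaggedTableau lam (μ k) T := by
  have hshape : ∀ k, IsFlaggedShape lam (μ k) := by
    intro k
    induction k using Fin.induction with
    | zero => rw [h0]; exact IsFlaggedShape.self hlam
    | succ k ih => exact ih.of_northStep (hchain k)
  exact fun k => ⟨rowEndFilling (μ k), (hshape k).isFlaggedTableau_rowEndFilling⟩
end

section
/- In the northmost-box-adding construction starting from partition λ with boxes added at rows r_1, r_2, ..., r_N, the sequence of rows satisfies: for every r, if ℓ is the last index with r_ℓ = r, then ℓ equals the total number of boxes b_1 + ... + b_r added in rows 1 through r, where b_j is the total number of boxes added in row j. -/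
open Finset

/-!
Adding a box to row `ρ` does not touch the rows north of `ρ`, and for a partition the
addability of a row only depends on that row and the rows above it. Hence a row north of the
northmost addable one stays non-addable forever, so the chosen rows `r_1 ≤ r_2 ≤ ⋯` weakly
increase. The boxes in rows `1, …, r_ℓ` are then exactly those added at steps `1, …, ℓ`.
-/

open Function

lemma Monotone.filter_le_eq_Iic {α β : Type*} [LinearOrder α] [Fintype α]
    [LocallyFiniteOrderBot α] [LinearOrder β] {f : α → β} (hf : Monotone f) {ℓ : α}
    (hℓ : ∀ i, ℓ < i → f i ≠ f ℓ) :
    Finset.univ.filter (fun i => f i ≤ f ℓ) = Finset.Iic ℓ := by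
  ext i
  simp only [Finset.mem_filter, Finset.mem_univ, true_and, Finset.mem_Iic]
  refine ⟨fun hi => ?_, fun hi => hf hi⟩
  by_contra! hlt
  exact hℓ i hlt (le_antisymm hi (hf hlt.le))

section Addable

variable {n : ℕ} {lam mu mu' : Fin n → ℕ}

lemma addableRow_iff (hmu : Antitone mu) {ρ : Fin n} :
    AddableRow lam mu ρ ↔ mu ρ < lam ρ + ρ ∧ ∀ a < ρ, mu ρ < mu a := by
  refine and_congr_right fun _ => ⟨fun h a ha => ?_, fun h a b hab => ?_⟩
  · simpa [update_of_ne ha.ne] using h ha.le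
  · rcases eq_or_ne a ρ with rfl | ha <;> rcases eq_or_ne b a with rfl | hb
    · exact le_rfl
    · rw [update_self, update_of_ne hb]
      exact (hmu hab).trans (Nat.le_succ _)
    · exact le_rfl
    · rcases eq_or_ne b ρ with rfl | hbρ
      · rw [update_self, update_of_ne ha]
        exact h a (lt_of_le_of_ne hab ha)
      · rw [update_of_ne ha, update_of_ne hbρ]
        exact hmu hab

lemma addableRow_congr (hmu : Antitone mu) (hmu' : Antitone mu') {ρ : Fin n}
    (h : ∀ a ≤ ρ, mu a = mu' a) : AddableRow lam mu ρ ↔ AddableRow lam mu' ρ := by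
  rw [addableRow_iff hmu, addableRow_iff hmu', h ρ le_rfl]
  exact and_congr_right fun _ => forall₂_congr fun a ha => by rw [h a ha.le]

lemma le_of_addableRow_update_s15 (hmu : Antitone mu) {ρ ρ' : Fin n}
    (hρ : AddableRow lam mu ρ) (hnorth : ∀ a < ρ, ¬ AddableRow lam mu a)
    (hρ' : AddableRow lam (update mu ρ (mu ρ + 1)) ρ') : ρ ≤ ρ' := by
  by_contra! h
  have hsame : ∀ a ≤ ρ', mu a = update mu ρ (mu ρ + 1) a := fun a ha =>
    (update_of_ne (ha.trans_lt h).ne _ _).symm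
  exact hnorth ρ' h ((addableRow_congr hmu hρ.2 hsame).2 hρ')

end Addable

def IsNorthmostRun {n N : ℕ} (lam : Fin n → ℕ) (μ : Fin (N + 1) → Fin n → ℕ)
    (r : Fin N → Fin n) : Prop :=
  ∀ k : Fin N, AddableRow lam (μ k.castSucc) (r k) ∧
    (∀ ρ' : Fin n, ρ' < r k → ¬ AddableRow lam (μ k.castSucc) ρ') ∧
    μ k.succ = update (μ k.castSucc) (r k) (μ k.castSucc (r k) + 1)

lemma IsNorthmostRun.monotone {n N : ℕ} {lam : Fin n → ℕ} {μ : Fin (N + 1) → Fin n → ℕ}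
    {r : Fin N → Fin n} (hrun : IsNorthmostRun lam μ r) (hμ : ∀ k, Antitone (μ k)) :
    Monotone r := by
  cases N with
  | zero => exact fun i => i.elim0
  | succ N =>
    refine Fin.monotone_iff_le_succ.2 fun i => ?_
    obtain ⟨hadd, hnorth, hnext⟩ := hrun i.castSucc
    have hadd' := (hrun i.succ).1
    rw [← Fin.succ_castSucc, hnext] at hadd'
    exact le_of_addableRow_update_s15 (hμ _) hadd hnorth hadd'

/-- In the northmost-box-adding construction with boxes added at rows `r_1, …, r_N`, if `ℓ`
is the last index with `r_ℓ = r`, then `ℓ` equals the total number `b_1 + ⋯ + b_r` of boxes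
added in rows `1` through `r`. -/
theorem last_box_index_eq_count {n N : ℕ} (lam : Fin n → ℕ) (hlam : Antitone lam)
    (μ : Fin (N + 1) → Fin n → ℕ) (h0 : μ 0 = lam) (r : Fin N → Fin n)
    (hstep : ∀ k : Fin N, AddableRow lam (μ k.castSucc) (r k) ∧
      (∀ ρ' : Fin n, ρ' < r k → ¬ AddableRow lam (μ k.castSucc) ρ') ∧
      μ k.succ = Function.update (μ k.castSucc) (r k) (μ k.castSucc (r k) + 1)) :
    ∀ ℓ : Fin N, (∀ i : Fin N, ℓ < i → r i ≠ r ℓ) →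
      (ℓ : ℕ) + 1 = (Finset.univ.filter (fun i : Fin N => r i ≤ r ℓ)).card := by
  intro ℓ hlast
  have hμ : ∀ k, Antitone (μ k) :=
    Fin.cases (h0 ▸ hlam) fun k => (hstep k).2.2 ▸ (hstep k).1.2
  have hrun : IsNorthmostRun lam μ r := hstep
  rw [(hrun.monotone hμ).filter_le_eq_Iic hlast, Fin.card_Iic]
end

section
/- The Newton polytope of the Schur polynomial s_λ(x_1,...,x_n) is the permutahedron P_λ, and s_λ has saturated Newton polytope: for every lattice point α ∈ P_λ, the coefficient of x^α in s_λ is strictly positive (it is a Kostka number). -/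
open Finset

/-!
Both halves reduce to the fact that, for a lattice point `α`, each of `K_{λ,α} > 0` and
`α ∈ P_λ` is equivalent to Rado's inequalities `∑_{i ∈ S} α_i ≤ λ_1 + ⋯ + λ_{|S|}` for all
`S ⊆ [n]`, with equality for `S = [n]`.

For `P_λ` this is Rado's theorem. The inequalities are linear and hold at the vertices; if they
hold at a point outside `P_λ`, separate it by a functional `z ↦ ∑ cᵢ zᵢ`: after sorting `c`,
Abel summation shows that the point is not separated from one of the vertices.

An SSYT of shape `λ` satisfies them because, column by column, the cells with entries in `S + 1`
fit into the first `|S|` rows. Conversely, a tableau of weight `α` is built from the largest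
letter down: letter `k` fills a horizontal strip of size `α_k` removed from the current shape as
low as possible. In terms of the prefix sums `F` of the shape the removal is
`t ↦ min (F t) (F (t + 1) - α_k)`, and the inequalities for the letters below `k` survive it.

Hence the support of `s_λ` is the set of lattice points of `P_λ`, which contains the vertices.
-/

section PrefixSums

variable {n : ℕ}

lemma sum_ite_val_lt {M : Type*} [AddCommMonoid M] (v : Fin n → M) (t : ℕ) :
    ∑ i : Fin n, (if (i : ℕ) < t then v i else 0) =
      ∑ k ∈ range t, if h : k < n then v ⟨k, h⟩ else 0 := by
  have hrange : ∑ i : Fin n, (if (i : ℕ) < t then v i else 0) =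
      ∑ k ∈ range n, if k < t then (if h : k < n then v ⟨k, h⟩ else 0) else 0 := by
    rw [← Fin.sum_univ_eq_sum_range]
    simp
  rw [hrange, ← sum_filter, ← sum_filter_of_ne (s := range t) (p := (· < n))
    fun k _ hk => (dite_ne_right_iff.mp hk).1]
  congr 1
  ext k
  simp only [mem_filter, mem_range]
  omega

lemma npsum_eq_sum_range (v : Fin n → ℕ) (t : ℕ) :
    npsum v t = ∑ k ∈ range t, if h : k < n then v ⟨k, h⟩ else 0 :=
  sum_ite_val_lt v t

lemma natCast_npsum (v : Fin n → ℕ) (t : ℕ) : (npsum v t : ℝ) = psum (fun i => (v i : ℝ)) t := by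
  simp [npsum, psum, Nat.cast_ite]

lemma psum_eq_sum_filter (v : Fin n → ℝ) (t : ℕ) :
    psum v t = ∑ i ∈ univ.filter (fun i : Fin n => (i : ℕ) < t), v i :=
  (sum_filter _ _).symm

lemma psum_min (v : Fin n → ℝ) (t : ℕ) : psum v (min n t) = psum v t := by
  unfold psum
  congr! 2 with i
  simp [i.isLt]

lemma psum_sub (a b : Fin n → ℝ) (t : ℕ) : psum (a - b) t = psum a t - psum b t := by
  simp only [psum, ← sum_sub_distrib, Pi.sub_apply]
  congr! 1 with i
  split_ifs <;> simp

/-- Abel summation. -/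
lemma sum_mul_le_sum_mul_of_psum_le {d a b : Fin n → ℝ} (hd : Monotone d)
    (hab : ∀ t, psum a t ≤ psum b t) (hsum : ∑ i, a i = ∑ i, b i) :
    ∑ i, d i * b i ≤ ∑ i, d i * a i := by
  set pad : (Fin n → ℝ) → ℕ → ℝ := fun v k => if h : k < n then v ⟨k, h⟩ else 0
  have hpad : ∑ i, d i * (a - b) i = ∑ k ∈ range n, pad d k • pad (a - b) k := by
    rw [← Fin.sum_univ_eq_sum_range]
    simp [pad]
  have hprefix : ∀ t, ∑ k ∈ range t, pad (a - b) k = psum a t - psum b t := fun t => by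
    rw [← psum_sub, psum, sum_ite_val_lt]
  have hd_pad : ∀ k, k + 1 < n → pad d k ≤ pad d (k + 1) := fun k hk => by
    simp only [pad, dif_pos hk, dif_pos (Nat.lt_of_succ_lt hk)]
    exact hd (Fin.mk_le_mk.mpr k.le_succ)
  have htotal : psum a n = psum b n := by simpa [psum] using hsum
  suffices 0 ≤ ∑ i, d i * (a - b) i by
    simpa [mul_sub, sum_sub_distrib] using this
  rw [hpad, sum_range_by_parts, hprefix n, htotal, sub_self, smul_zero, zero_sub, neg_nonneg]
  refine sum_nonpos fun k hk => ?_
  rw [mem_range] at hk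
  rw [hprefix (k + 1), smul_eq_mul]
  exact mul_nonpos_of_nonneg_of_nonpos (sub_nonneg.mpr (hd_pad k (by omega)))
    (sub_nonpos.mpr (hab _))

end PrefixSums

section Rado

variable {n : ℕ}

lemma sum_le_sum_of_card_eq_of_le {ι M : Type*} [AddCommMonoid M] [LinearOrder M]
    [IsOrderedAddMonoid M] {v : ι → M} {A B : Finset ι} (hAB : #A = #B)
    (hv : ∀ a ∈ A, ∀ b ∈ B, v a ≤ v b) : ∑ a ∈ A, v a ≤ ∑ b ∈ B, v b := by
  rcases B.eq_empty_or_nonempty with rfl | hB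
  · simp [card_eq_zero.mp hAB]
  calc ∑ a ∈ A, v a ≤ #A • B.inf' hB v := sum_le_card_nsmul _ _ _ fun a ha => le_inf' _ _ (hv a ha)
    _ = #B • B.inf' hB v := by rw [hAB]
    _ ≤ ∑ b ∈ B, v b := card_nsmul_le_sum _ _ _ fun b hb => inf'_le _ hb

lemma sum_le_psum_card {v : Fin n → ℝ} (hv : Antitone v) (S : Finset (Fin n)) :
    ∑ i ∈ S, v i ≤ psum v #S := by
  set T := univ.filter fun i : Fin n => (i : ℕ) < #S
  have hT : #T = #S := by
    rw [Fin.card_filter_val_lt, min_eq_right (by simpa using card_le_univ S)]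
  rw [psum_eq_sum_filter, ← sum_inter_add_sum_sdiff S T, ← sum_inter_add_sum_sdiff T S, inter_comm]
  gcongr 1
  refine sum_le_sum_of_card_eq_of_le (card_sdiff_comm hT.symm) fun a ha b hb => hv ?_
  simp only [T, mem_sdiff, mem_filter, mem_univ, true_and] at ha hb
  exact (Fin.lt_def.mpr (by omega)).le

theorem sum_le_psum_of_mem_permutahedron {x y : Fin n → ℝ} (hy : Antitone y)
    (hx : x ∈ permutahedron y) (S : Finset (Fin n)) : ∑ i ∈ S, x i ≤ psum y #S := by
  refine convexHull_min ?_ (convex_halfSpace_le (𝕜 := ℝ) ⟨fun _ _ => sum_add_distrib,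
    fun _ _ => (mul_sum _ _ _).symm⟩ _) hx
  rintro _ ⟨σ, rfl⟩
  simpa [← sum_map S σ.toEmbedding] using sum_le_psum_card hy (S.map σ.toEmbedding)

theorem sum_eq_of_mem_permutahedron {x y : Fin n → ℝ} (hx : x ∈ permutahedron y) :
    ∑ i, x i = ∑ i, y i := by
  refine convexHull_min ?_ (convex_hyperplane (𝕜 := ℝ) ⟨fun _ _ => sum_add_distrib,
    fun _ _ => (mul_sum _ _ _).symm⟩ _) hx
  rintro _ ⟨σ, rfl⟩
  exact Equiv.sum_comp σ y

lemma isClosed_permutahedron (v : Fin n → ℝ) : IsClosed (permutahedron v) := by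
  have horbit : {w | ∃ σ : Equiv.Perm (Fin n), w = v ∘ σ}.Finite :=
    (Set.finite_range fun σ : Equiv.Perm (Fin n) => v ∘ σ).subset fun _ ⟨σ, hσ⟩ => ⟨σ, hσ.symm⟩
  exact (horbit.isCompact_convexHull ℝ).isClosed

/-- For `c` sorted by `σ`, Abel summation gives `∑ cᵢ xᵢ ≥ ∑ cᵢ (y ∘ σ⁻¹)ᵢ`, so no functional
separates `x` from the permutahedron. -/
theorem mem_permutahedron_of_sum_le_psum {x y : Fin n → ℝ}
    (hS : ∀ S : Finset (Fin n), ∑ i ∈ S, x i ≤ psum y #S) (hsum : ∑ i, x i = ∑ i, y i) :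
    x ∈ permutahedron y := by
  by_contra hx
  obtain ⟨f, u, hfx, hfP⟩ :=
    geometric_hahn_banach_point_closed (convex_convexHull ℝ _) (isClosed_permutahedron y) hx
  set c : Fin n → ℝ := fun i => f fun j => if i = j then 1 else 0
  have hf : ∀ z, f z = ∑ i, c i * z i := fun z =>
    (f.toLinearMap.pi_apply_eq_sum_univ z).trans (by simp [c, mul_comm])
  set σ := Tuple.sort c
  have hprefix : ∀ t, psum (x ∘ σ) t ≤ psum y t := fun t => by
    have := hS ((univ.filter fun i : Fin n => (i : ℕ) < t).map σ.toEmbedding)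
    rwa [sum_map, card_map, Fin.card_filter_val_lt, psum_min, ← psum_eq_sum_filter] at this
  have hvertex : f (y ∘ σ.symm) ≤ f x := by
    rw [hf, hf]
    calc ∑ i, c i * y (σ.symm i) = ∑ i, c (σ i) * y i := by
          rw [← Equiv.sum_comp σ]; simp
      _ ≤ ∑ i, c (σ i) * x (σ i) := sum_mul_le_sum_mul_of_psum_le (Tuple.monotone_sort c)
          hprefix ((Equiv.sum_comp σ x).trans hsum)
      _ = ∑ i, c i * x i := Equiv.sum_comp σ fun i => c i * x i
  linarith [hfP _ (subset_convexHull ℝ _ ⟨σ.symm, rfl⟩)]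

theorem mem_permutahedron_iff {x y : Fin n → ℝ} (hy : Antitone y) :
    x ∈ permutahedron y ↔
      (∀ S : Finset (Fin n), ∑ i ∈ S, x i ≤ psum y #S) ∧ ∑ i, x i = ∑ i, y i :=
  ⟨fun hx => ⟨sum_le_psum_of_mem_permutahedron hy hx, sum_eq_of_mem_permutahedron hx⟩,
    fun h => mem_permutahedron_of_sum_le_psum h.1 h.2⟩

theorem natCast_mem_permutahedron_iff {lam : Fin n → ℕ} (hlam : Antitone lam) {a : Fin n → ℕ} :
    (fun i => (a i : ℝ)) ∈ permutahedron (fun i => (lam i : ℝ)) ↔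
      (∀ S : Finset (Fin n), ∑ i ∈ S, a i ≤ npsum lam #S) ∧ ∑ i, a i = ∑ i, lam i := by
  rw [mem_permutahedron_iff fun i j hij => Nat.cast_le.mpr (hlam hij)]
  simp_rw [← natCast_npsum]
  norm_cast

end Rado

section Tableaux

variable {n : ℕ}

def skewCells (a b : Fin n → ℕ) : Finset (Fin n × ℕ) :=
  univ.biUnion fun r => {r} ×ˢ Ico (a r) (b r)

@[simp]
lemma mem_skewCells {a b : Fin n → ℕ} {p : Fin n × ℕ} :
    p ∈ skewCells a b ↔ a p.1 ≤ p.2 ∧ p.2 < b p.1 := by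
  simp [skewCells, Prod.ext_iff, eq_comm]

lemma card_skewCells (a b : Fin n → ℕ) : #(skewCells a b) = ∑ r, (b r - a r) := by
  rw [skewCells, card_biUnion fun r _ r' _ hrr' => disjoint_left.mpr fun p hp hp' => hrr' ?_]
  · simp
  · simp only [mem_product, mem_singleton] at hp hp'
    rw [← hp.1, hp'.1]

lemma injOn_of_lt_of_snd_eq {B : Set (Fin n × ℕ)} {f : Fin n × ℕ → ℕ}
    (hf : ∀ u ∈ B, ∀ v ∈ B, u.2 = v.2 → u.1 < v.1 → f u < f v) :
    Set.InjOn (fun p => (f p, p.2)) B := by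
  intro p hp q hq h
  simp only [Prod.mk.injEq] at h
  rcases lt_trichotomy p.1 q.1 with hpq | hpq | hpq
  · exact absurd h.1 (hf p hp q hq h.2 hpq).ne
  · exact Prod.ext hpq h.2
  · exact absurd h.1 (hf q hq p hp h.2.symm hpq).ne'

def columnRank (B : Finset (Fin n × ℕ)) (p : Fin n × ℕ) : ℕ :=
  #(B.filter fun q => q.2 = p.2 ∧ q.1 < p.1)

lemma columnRank_le (B : Finset (Fin n × ℕ)) (p : Fin n × ℕ) : columnRank B p ≤ p.1 := by
  calc columnRank B p ≤ #(Iio p.1) := card_le_card_of_injOn Prod.fst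
          (fun q hq => by simp_all) (fun q hq q' hq' h => by simp_all [Prod.ext_iff])
    _ = p.1 := Fin.card_Iio _

lemma columnRank_lt_columnRank {B : Finset (Fin n × ℕ)} {p q : Fin n × ℕ} (hq : q ∈ B)
    (hcol : q.2 = p.2) (hrow : q.1 < p.1) : columnRank B q < columnRank B p := by
  refine card_lt_card ⟨fun w hw => ?_, fun hsub => ?_⟩
  · simp only [mem_filter] at hw ⊢
    exact ⟨hw.1, hw.2.1.trans hcol, hw.2.2.trans hrow⟩
  · simpa using (mem_filter.mp (hsub (mem_filter.mpr ⟨hq, hcol, hrow⟩))).2.2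

noncomputable def weight (lam : Fin n → ℕ) (T : Fin n → ℕ → ℕ) (i : Fin n) : ℕ :=
  Set.ncard {p : Fin n × ℕ | p.2 < lam p.1 ∧ T p.1 p.2 = (i : ℕ) + 1}

def entryCells (lam : Fin n → ℕ) (T : Fin n → ℕ → ℕ) (S : Finset (Fin n)) :
    Finset (Fin n × ℕ) :=
  (skewCells 0 lam).filter fun p => ∃ i ∈ S, T p.1 p.2 = i + 1

variable {lam : Fin n → ℕ} {T : Fin n → ℕ → ℕ}

lemma weight_eq_card (lam : Fin n → ℕ) (T : Fin n → ℕ → ℕ) (i : Fin n) :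
    weight lam T i = #((skewCells 0 lam).filter fun p => T p.1 p.2 = i + 1) := by
  rw [weight, ← Set.ncard_coe_finset]
  congr 1
  ext p
  simp

lemma sum_weight_eq_card (S : Finset (Fin n)) :
    ∑ i ∈ S, weight lam T i = #(entryCells lam T S) := by
  simp_rw [weight_eq_card]
  rw [← card_biUnion fun i _ j _ hij => disjoint_filter.mpr fun p _ hi hj =>
    hij (Fin.ext (by omega))]
  congr 1
  ext p
  simp only [entryCells, mem_biUnion, mem_filter]
  tauto

lemma sum_weight (hT : IsSSYT lam T) : ∑ i, weight lam T i = ∑ i, lam i := by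
  rw [sum_weight_eq_card, entryCells, filter_true_of_mem, card_skewCells]
  · simp
  intro p hp
  obtain ⟨h1, h2⟩ := hT.1 p.1 p.2 (mem_skewCells.mp hp).2
  exact ⟨⟨T p.1 p.2 - 1, by omega⟩, mem_univ _, by simp; omega⟩

lemma IsSSYT.lt_of_fst_lt (hT : IsSSYT lam T) {u v : Fin n × ℕ} (hu : u ∈ skewCells 0 lam)
    (hv : v ∈ skewCells 0 lam) (hcol : u.2 = v.2) (hrow : u.1 < v.1) :
    T u.1 u.2 < T v.1 v.2 := by
  rw [mem_skewCells] at hu hv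
  rw [hcol] at hu ⊢
  exact hT.2.2 u.1 v.1 hrow v.2 hv.2 hu.2

/-- By column strictness, the cells of a column carry distinct letters of `S`. -/
lemma columnRank_entryCells_lt (hT : IsSSYT lam T) {S : Finset (Fin n)} {p : Fin n × ℕ}
    (hp : p ∈ entryCells lam T S) : columnRank (entryCells lam T S) p < #S := by
  set C := (entryCells lam T S).filter fun q => q.2 = p.2 ∧ q.1 ≤ p.1
  have hC : columnRank (entryCells lam T S) p < #C :=
    card_lt_card ⟨monotone_filter_right _ fun q _ hq => ⟨hq.1, hq.2.le⟩, fun hsub => by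
      simpa using (mem_filter.mp (hsub (mem_filter.mpr ⟨hp, rfl, le_rfl⟩))).2.2⟩
  have hmaps : ∀ q ∈ C, (T q.1 q.2, q.2) ∈ (S.image fun i : Fin n => (i : ℕ) + 1) ×ˢ {p.2} :=
    fun q hq => by
      obtain ⟨⟨-, i, hi, h⟩, hcol, -⟩ := mem_filter.mp hq |>.imp_left mem_filter.mp
      exact mem_product.mpr ⟨mem_image.mpr ⟨i, hi, h.symm⟩, mem_singleton.mpr hcol⟩
  calc columnRank (entryCells lam T S) p < #C := hC
    _ ≤ #((S.image fun i : Fin n => (i : ℕ) + 1) ×ˢ {p.2}) :=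
        card_le_card_of_injOn _ hmaps (injOn_of_lt_of_snd_eq fun u hu v hv =>
          hT.lt_of_fst_lt (mem_filter.mp (mem_filter.mp hu).1).1
            (mem_filter.mp (mem_filter.mp hv).1).1)
    _ ≤ #S := by rw [card_product, card_singleton, mul_one]; exact card_image_le

/-- The cells with entries in `S + 1` are pushed to the top of their columns; by column
strictness they land in the first `#S` rows. -/
theorem sum_weight_le_npsum (hlam : Antitone lam) (hT : IsSSYT lam T) (S : Finset (Fin n)) :
    ∑ i ∈ S, weight lam T i ≤ npsum lam #S := by
  set B := entryCells lam T S
  have hmaps : ∀ p ∈ B, ((⟨columnRank B p, (columnRank_le B p).trans_lt p.1.isLt⟩ : Fin n), p.2) ∈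
      skewCells 0 fun r => if (r : ℕ) < #S then lam r else 0 := fun p hp => by
    have hp' := mem_skewCells.mp (mem_filter.mp hp).1
    rw [mem_skewCells, if_pos (columnRank_entryCells_lt hT hp)]
    exact ⟨Nat.zero_le _, hp'.2.trans_le (hlam (columnRank_le B p))⟩
  rw [sum_weight_eq_card]
  calc #B ≤ #(skewCells 0 fun r => if (r : ℕ) < #S then lam r else 0) :=
        card_le_card_of_injOn _ hmaps fun p hp q hq h =>
          injOn_of_lt_of_snd_eq (fun u hu _ _ hcol hrow => columnRank_lt_columnRank hu hcol hrow)
            hp hq (by simpa [Fin.ext_iff] using h)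
    _ = npsum lam #S := by simp [card_skewCells, npsum]

end Tableaux

section StripChain

/-- A chain of shapes `μ 0 ⊆ μ 1 ⊆ ⋯` from the empty shape, with `μ k r` the length of row `r`
of `μ k`, in which every `μ (k + 1) / μ k` is a horizontal strip. -/
structure IsStripChain (μ : ℕ → ℕ → ℕ) : Prop where
  zero : ∀ r, μ 0 r = 0
  mono : ∀ k r, μ k r ≤ μ (k + 1) r
  interlace : ∀ k r, μ (k + 1) (r + 1) ≤ μ k r

variable {n : ℕ} {μ : ℕ → ℕ → ℕ}

/-- The tableau whose entries `≤ k` fill the shape `μ k`. -/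
noncomputable def stripTableau (n : ℕ) (μ : ℕ → ℕ → ℕ) (r : Fin n) (c : ℕ) : ℕ :=
  if c < μ n r then sInf {k | c < μ k r} else 0

lemma stripTableau_eq_zero (r : Fin n) {c : ℕ} (hc : μ n r ≤ c) : stripTableau n μ r c = 0 :=
  if_neg hc.not_gt

namespace IsStripChain

lemma monotone (h : IsStripChain μ) (r : ℕ) : Monotone fun k => μ k r :=
  monotone_nat_of_le_succ fun k => h.mono k r

lemma antitone (h : IsStripChain μ) (k : ℕ) : Antitone (μ k) := by
  refine antitone_nat_of_succ_le fun r => ?_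
  cases k with
  | zero => simp [h.zero]
  | succ k => exact (h.interlace k r).trans (h.mono k r)

lemma sInf_eq_succ_iff (h : IsStripChain μ) (r c i : ℕ) :
    sInf {k | c < μ k r} = i + 1 ↔ μ i r ≤ c ∧ c < μ (i + 1) r := by
  rw [Nat.sInf_upward_closed_eq_succ_iff fun k l hkl hk => hk.trans_le (h.monotone r hkl)]
  simp [and_comm]

lemma sInf_pos (h : IsStripChain μ) {r c k : ℕ} (hc : c < μ k r) : 0 < sInf {k | c < μ k r} := by
  refine Nat.pos_of_ne_zero fun h0 => ?_
  have := h0 ▸ Nat.sInf_mem ⟨k, hc⟩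
  simp [h.zero] at this

theorem isSSYT_stripTableau (h : IsStripChain μ) :
    IsSSYT (fun r : Fin n => μ n r) (stripTableau n μ) := by
  refine ⟨fun r c hc => ?_, fun r c c' hcc' hc' => ?_, fun r r' hrr' c hc' hc => ?_⟩
  · simp only [stripTableau, if_pos hc]
    exact ⟨h.sInf_pos hc, Nat.sInf_le hc⟩
  · simp only [stripTableau, if_pos (hcc'.trans_lt hc'), if_pos hc']
    exact Nat.sInf_le (hcc'.trans_lt (Nat.sInf_mem (s := {k | c' < μ k r}) ⟨n, hc'⟩))
  · simp only [stripTableau, if_pos hc, if_pos hc']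
    obtain ⟨j, hj⟩ := Nat.exists_eq_add_of_lt (h.sInf_pos hc')
    rw [zero_add] at hj
    have hrow : c < μ j r := ((h.sInf_eq_succ_iff _ _ _).mp hj).2.trans_le
      ((h.antitone (j + 1) (Nat.succ_le_of_lt hrr')).trans (h.interlace j r))
    rw [hj]
    exact Nat.lt_succ_of_le (Nat.sInf_le hrow)

theorem weight_stripTableau (h : IsStripChain μ) (i : Fin n) :
    weight (fun r : Fin n => μ n r) (stripTableau n μ) i =
      ∑ r : Fin n, (μ (i + 1) r - μ i r) := by
  rw [weight_eq_card, ← card_skewCells]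
  congr 1
  ext p
  have hle : μ (i + 1) p.1 ≤ μ n p.1 := h.monotone p.1 (Nat.succ_le_of_lt i.isLt)
  rw [mem_filter, mem_skewCells, mem_skewCells, stripTableau]
  constructor
  · rintro ⟨⟨-, hc⟩, hT⟩
    rw [if_pos hc] at hT
    exact (h.sInf_eq_succ_iff _ _ _).mp hT
  · intro hc
    rw [if_pos (hc.2.trans_le hle), h.sInf_eq_succ_iff]
    exact ⟨⟨Nat.zero_le _, hc.2.trans_le hle⟩, hc⟩

end IsStripChain

end StripChain

section StripRemoval

/-- `F` is the sequence of prefix sums `t ↦ ν 0 + ⋯ + ν (t - 1)` of a partition `ν`. -/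
structure IsPartitionSums (F : ℕ → ℕ) : Prop where
  zero : F 0 = 0
  mono : ∀ t, F t ≤ F (t + 1)
  concave : ∀ t, F t + F (t + 2) ≤ 2 * F (t + 1)

/-- The prefix sums after removing from `F` a horizontal strip of size `a`, placed as low as
possible. -/
def stripSums (F : ℕ → ℕ) (a t : ℕ) : ℕ := min (F t) (F (t + 1) - a)

namespace IsPartitionSums

variable {F : ℕ → ℕ} {a : ℕ}

lemma le_of_le (hF : IsPartitionSums F) {s t : ℕ} (hst : s ≤ t) : F s ≤ F t :=
  monotone_nat_of_le_succ hF.mono hst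

lemma local_bounds (hF : IsPartitionSums F) (t : ℕ) :
    F t ≤ F (t + 1) ∧ F (t + 1) ≤ F (t + 2) ∧ F (t + 2) ≤ F (t + 3) ∧
      F t + F (t + 2) ≤ 2 * F (t + 1) ∧ F (t + 1) + F (t + 3) ≤ 2 * F (t + 2) ∧
      F 1 ≤ F (t + 1) :=
  ⟨hF.mono t, hF.mono (t + 1), hF.mono (t + 2), hF.concave t, hF.concave (t + 1),
    hF.le_of_le (Nat.le_add_left 1 t)⟩

lemma strip (hF : IsPartitionSums F) (ha : a ≤ F 1) : IsPartitionSums (stripSums F a) := by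
  refine ⟨?_, fun t => ?_, fun t => ?_⟩ <;> simp only [stripSums, add_assoc, Nat.reduceAdd]
  · have := hF.zero; omega
  all_goals have := hF.local_bounds t; omega

lemma stripSums_interlace (hF : IsPartitionSums F) (ha : a ≤ F 1) (i : ℕ) :
    F (i + 2) - F (i + 1) ≤ stripSums F a (i + 1) - stripSums F a i ∧
      stripSums F a (i + 1) - stripSums F a i ≤ F (i + 1) - F i := by
  have := hF.local_bounds i
  simp only [stripSums, add_assoc, Nat.reduceAdd]
  omega

end IsPartitionSums

variable {F g : ℕ → ℕ} {m : ℕ}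

/-- A set `S` of earlier letters is bounded both on its own and together with `m`. -/
lemma sum_le_stripSums (hS : ∀ S ⊆ range (m + 1), ∑ k ∈ S, g k ≤ F #S) :
    ∀ S ⊆ range m, ∑ k ∈ S, g k ≤ stripSums F (g m) #S := by
  intro S hSm
  have hm : m ∉ S := fun h => by simpa using hSm h
  have hins := hS (insert m S) (insert_subset (by simp) (hSm.trans (range_subset_range.mpr
    m.le_succ)))
  rw [sum_insert hm, card_insert_of_notMem hm] at hins
  have := hS S (hSm.trans (range_subset_range.mpr m.le_succ))
  simp only [stripSums]
  omega

lemma stripSums_eq_of_le (htail : ∀ t, m + 1 ≤ t → F t = ∑ k ∈ range (m + 1), g k)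
    (hm : ∑ k ∈ range m, g k ≤ F m) :
    ∀ t, m ≤ t → stripSums F (g m) t = ∑ k ∈ range m, g k := by
  intro t ht
  have hsucc := htail (t + 1) (by omega)
  rw [sum_range_succ] at hsucc
  simp only [stripSums]
  rcases ht.eq_or_lt with rfl | hlt
  · omega
  · have := htail t hlt
    rw [sum_range_succ] at this
    omega

/-- `chainSums F g n d`: the prefix sums left after removing from `F` horizontal strips of sizes
`g (n - 1), g (n - 2), …, g (n - d)`. -/
def chainSums (F g : ℕ → ℕ) (n : ℕ) : ℕ → ℕ → ℕ
  | 0 => F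
  | d + 1 => stripSums (chainSums F g n d) (g (n - (d + 1)))

theorem chainSums_spec {n : ℕ} (hF : IsPartitionSums F)
    (hS : ∀ S ⊆ range n, ∑ k ∈ S, g k ≤ F #S)
    (htail : ∀ t, n ≤ t → F t = ∑ k ∈ range n, g k) (d : ℕ) (hd : d ≤ n) :
    IsPartitionSums (chainSums F g n d) ∧
      (∀ S ⊆ range (n - d), ∑ k ∈ S, g k ≤ chainSums F g n d #S) ∧
      ∀ t, n - d ≤ t → chainSums F g n d t = ∑ k ∈ range (n - d), g k := by
  induction d with
  | zero => exact ⟨hF, hS, htail⟩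
  | succ d ih =>
    obtain ⟨hF', hS', htail'⟩ := ih (by omega)
    have hnd : n - d = n - (d + 1) + 1 := by omega
    rw [hnd] at hS' htail'
    have ha : g (n - (d + 1)) ≤ chainSums F g n d 1 := by
      simpa using hS' {n - (d + 1)} (by simp)
    exact ⟨hF'.strip ha, sum_le_stripSums hS', stripSums_eq_of_le htail'
      (by simpa using hS' (range (n - (d + 1))) (range_subset_range.mpr (by omega)))⟩

lemma chainSums_of_lt {n k : ℕ} (hk : k < n) :
    chainSums F g n (n - k) = stripSums (chainSums F g n (n - (k + 1))) (g k) := by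
  rw [show n - k = n - (k + 1) + 1 by omega, chainSums, show n - (n - (k + 1) + 1) = k by omega]

/-- Row `r` of the shape `μ k` of the chain: what is left after removing the strips of the
letters `n - 1, …, k`. -/
def chainShape (F g : ℕ → ℕ) (n k r : ℕ) : ℕ :=
  chainSums F g n (n - k) (r + 1) - chainSums F g n (n - k) r

section
variable {n : ℕ} (hF : IsPartitionSums F) (hS : ∀ S ⊆ range n, ∑ k ∈ S, g k ≤ F #S)
    (htail : ∀ t, n ≤ t → F t = ∑ k ∈ range n, g k)
include hF hS htail

theorem isStripChain_chainShape : IsStripChain (chainShape F g n) := by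
  have hstep : ∀ k < n, ∀ r, chainShape F g n (k + 1) (r + 1) ≤ chainShape F g n k r ∧
      chainShape F g n k r ≤ chainShape F g n (k + 1) r := fun k hk r => by
    obtain ⟨hF', hS', -⟩ := chainSums_spec hF hS htail (n - (k + 1)) (by omega)
    have ha : g k ≤ chainSums F g n (n - (k + 1)) 1 := by
      simpa using hS' {k} (by simp; omega)
    simp only [chainShape, chainSums_of_lt hk]
    exact hF'.stripSums_interlace ha r
  refine ⟨fun r => ?_, fun k r => ?_, fun k r => ?_⟩
  · have htail' := (chainSums_spec hF hS htail n le_rfl).2.2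
    simp [chainShape, htail' (r + 1), htail' r]
  · rcases lt_or_ge k n with hk | hk
    · exact (hstep k hk r).2
    · simp [chainShape, Nat.sub_eq_zero_of_le hk, Nat.sub_eq_zero_of_le (hk.trans k.le_succ)]
  · rcases lt_or_ge k n with hk | hk
    · exact (hstep k hk r).1
    · have := hF.local_bounds r
      simp only [chainShape, Nat.sub_eq_zero_of_le hk, Nat.sub_eq_zero_of_le (hk.trans k.le_succ),
        chainSums, add_assoc, Nat.reduceAdd]
      omega

lemma sum_chainShape {k : ℕ} (hk : k ≤ n) :
    ∑ r ∈ range n, chainShape F g n k r = ∑ i ∈ range k, g i := by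
  obtain ⟨hF', -, htail'⟩ := chainSums_spec hF hS htail (n - k) (by omega)
  simp only [chainShape]
  rw [sum_range_tsub (monotone_nat_of_le_succ hF'.mono), hF'.zero,
    htail' n (by omega), Nat.sub_sub_self hk, Nat.sub_zero]

end

variable {n : ℕ} {lam : Fin n → ℕ}

lemma isPartitionSums_npsum (hlam : Antitone lam) : IsPartitionSums (npsum lam) := by
  set f : ℕ → ℕ := fun k => if h : k < n then lam ⟨k, h⟩ else 0
  have hf : ∀ k, f (k + 1) ≤ f k := fun k => by
    by_cases hk : k + 1 < n
    · simp only [f, dif_pos hk, dif_pos (Nat.lt_of_succ_lt hk)]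
      exact hlam (Fin.mk_le_mk.mpr k.le_succ)
    · simp [f, dif_neg hk]
  have hF : npsum lam = fun t => ∑ k ∈ range t, f k := funext (npsum_eq_sum_range lam)
  refine ⟨by simp [hF], fun t => ?_, fun t => ?_⟩ <;> simp only [hF, sum_range_succ]
  · omega
  · have := hf t; omega

theorem exists_stripChain (hlam : Antitone lam) {α : Fin n → ℕ}
    (hS : ∀ S : Finset (Fin n), ∑ i ∈ S, α i ≤ npsum lam #S) (hsum : ∑ i, α i = ∑ i, lam i) :
    ∃ μ : ℕ → ℕ → ℕ, IsStripChain μ ∧ (∀ r : Fin n, μ n r = lam r) ∧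
      ∀ i : Fin n, ∑ r : Fin n, (μ (i + 1) r - μ i r) = α i := by
  set g : ℕ → ℕ := fun k => if h : k < n then α ⟨k, h⟩ else 0
  have hg : ∑ k ∈ range n, g k = ∑ i, α i := by
    rw [← Fin.sum_univ_eq_sum_range]; simp [g]
  have hS' : ∀ S ⊆ range n, ∑ k ∈ S, g k ≤ npsum lam #S := fun S hSn => by
    set S' := univ.filter fun i : Fin n => (i : ℕ) ∈ S
    have hS_eq : S'.map Fin.valEmbedding = S := by
      ext k
      simp only [S', mem_map, mem_filter, mem_univ, true_and, Fin.valEmbedding_apply]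
      exact ⟨fun ⟨i, hi, hik⟩ => hik ▸ hi, fun hk => ⟨⟨k, mem_range.mp (hSn hk)⟩, hk, rfl⟩⟩
    calc ∑ k ∈ S, g k = ∑ i ∈ S', α i := by rw [← hS_eq, sum_map]; simp [g]
      _ ≤ npsum lam #S' := hS S'
      _ = npsum lam #S := by rw [← hS_eq, card_map]
  have htail : ∀ t, n ≤ t → npsum lam t = ∑ k ∈ range n, g k := fun t ht => by
    rw [hg, hsum, npsum]
    exact sum_congr rfl fun i _ => if_pos (i.isLt.trans_le ht)
  have hF := isPartitionSums_npsum hlam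
  have hμ := isStripChain_chainShape hF hS' htail
  refine ⟨chainShape (npsum lam) g n, hμ, fun r => ?_, fun i => ?_⟩
  · simp [chainShape, chainSums, npsum_eq_sum_range, sum_range_succ]
  · rw [Fin.sum_univ_eq_sum_range (fun r => chainShape _ g n (i + 1) r - chainShape _ g n i r),
      sum_tsub_distrib _ fun r _ => hμ.mono _ _, sum_chainShape hF hS' htail i.isLt,
      sum_chainShape hF hS' htail i.isLt.le, sum_range_succ, Nat.add_sub_cancel_left]
    simp [g]

end StripRemoval

section Kostka

variable {n : ℕ} {lam : Fin n → ℕ}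

lemma finite_setOf_isSSYT (lam : Fin n → ℕ) :
    {T : Fin n → ℕ → ℕ | IsSSYT lam T ∧ ∀ r c, lam r ≤ c → T r c = 0}.Finite := by
  refine (Set.finite_range fun (F : (r : Fin n) → Fin (lam r) → Fin (n + 1)) r c =>
    if h : c < lam r then (F r ⟨c, h⟩ : ℕ) else 0).subset fun T ⟨hT, hzero⟩ => ?_
  refine ⟨fun r c => ⟨T r c, Nat.lt_succ_of_le (hT.1 r c c.isLt).2⟩,
    funext fun r => funext fun c => ?_⟩
  by_cases hc : c < lam r
  · simp [hc]
  · simp [hc, hzero r c (not_lt.mp hc)]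

lemma kostka_pos_iff_exists (lam : Fin n → ℕ) (α : Fin n →₀ ℕ) :
    0 < kostka lam α ↔ ∃ T : Fin n → ℕ → ℕ, IsSSYT lam T ∧ (∀ r c, lam r ≤ c → T r c = 0) ∧
      ∀ i, α i = weight lam T i :=
  Set.ncard_pos ((finite_setOf_isSSYT lam).subset fun _ hT => ⟨hT.1, hT.2.1⟩)

theorem coeff_schur (lam : Fin n → ℕ) (α : Fin n →₀ ℕ) :
    MvPolynomial.coeff α (schur lam) = kostka lam α := by
  rw [schur, MvPolynomial.coeff_sum]
  by_cases hα : α ∈ Iic (Finsupp.equivFunOnFinite.symm fun _ : Fin n => ∑ i, lam i)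
  · rw [sum_eq_single_of_mem α hα fun β _ hβ => by simp [MvPolynomial.coeff_monomial, hβ]]
    simp
  · rw [sum_eq_zero fun β hβ => by simp [MvPolynomial.coeff_monomial, ne_of_mem_of_not_mem hβ hα],
      eq_comm, Nat.cast_eq_zero, ← Nat.le_zero, ← not_lt, kostka_pos_iff_exists]
    rintro ⟨T, hT, -, hw⟩
    refine hα (mem_Iic.mpr fun i => ?_)
    calc α i = weight lam T i := hw i
      _ ≤ ∑ j, weight lam T j := single_le_sum (fun j _ => Nat.zero_le _) (mem_univ i)
      _ = ∑ j, lam j := sum_weight hT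

theorem kostka_pos_iff (hlam : Antitone lam) (α : Fin n →₀ ℕ) :
    0 < kostka lam α ↔ (fun i => (α i : ℝ)) ∈ permutahedron (fun i => (lam i : ℝ)) := by
  rw [kostka_pos_iff_exists, natCast_mem_permutahedron_iff hlam]
  constructor
  · rintro ⟨T, hT, -, hw⟩
    simp_rw [hw]
    exact ⟨sum_weight_le_npsum hlam hT, sum_weight hT⟩
  · rintro ⟨hS, hsum⟩
    obtain ⟨μ, hμ, hshape, hw⟩ := exists_stripChain hlam hS hsum
    have hlam' : (fun r : Fin n => μ n r) = lam := funext hshape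
    refine ⟨stripTableau n μ, hlam' ▸ hμ.isSSYT_stripTableau,
      fun r c hc => stripTableau_eq_zero r ((hshape r).trans_le hc), fun i => ?_⟩
    rw [← hlam', hμ.weight_stripTableau, hw]

end Kostka

/-- The Newton polytope of the Schur polynomial `s_λ(x_1, …, x_n)` is the permutahedron
`P_λ`, and `s_λ` has SNP: every lattice point `α ∈ P_λ` has strictly positive coefficient
(a Kostka number). -/
theorem schur_newton_eq_permutahedron {n : ℕ} (lam : Fin n → ℕ) (hlam : Antitone lam) :
    newton (schur lam) = permutahedron (fun i => (lam i : ℝ)) ∧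
      ∀ α : Fin n →₀ ℕ, (fun i => (α i : ℝ)) ∈ permutahedron (fun i => (lam i : ℝ)) →
        0 < MvPolynomial.coeff α (schur lam) := by
  have hsupp : ∀ α, α ∈ (schur lam).support ↔
      (fun i => (α i : ℝ)) ∈ permutahedron (fun i => (lam i : ℝ)) := fun α => by
    rw [MvPolynomial.mem_support_iff, coeff_schur, Nat.cast_ne_zero, ← Nat.pos_iff_ne_zero,
      kostka_pos_iff hlam]
  refine ⟨subset_antisymm ?_ ?_, fun α hα => ?_⟩
  · refine convexHull_min ?_ (convex_convexHull ℝ _)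
    rintro _ ⟨α, hα, rfl⟩
    exact (hsupp α).mp hα
  · refine convexHull_mono ?_
    rintro _ ⟨σ, rfl⟩
    refine ⟨Finsupp.equivFunOnFinite.symm (lam ∘ σ), (hsupp _).mpr ?_, rfl⟩
    exact subset_convexHull ℝ _ ⟨σ, rfl⟩
  · rw [coeff_schur]
    exact_mod_cast (kostka_pos_iff hlam α).mpr hα
end
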